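/- Let Ω ⊆ ℝ^m be open with torsion-free C^∞ Christoffel symbols Γ^λ_{μν} : Ω → ℝ (i.e. Γ^λ_{μν} = Γ^λ_{νμ}), let φ : W → Ω be a geodesic flow, let γ : I → Ω be a C^∞ curve, let f(t,s) = φ(γ(t), γ'(t), s) be the ∇-tangent surface defined on an open neighborhood V of I × {0}, and let F : V → ℝ^m be a C^∞ map with s · F(t,s) = ∂f/∂t(t,s) − ∂f/∂s(t,s) on V. Then for all t ∈ I, (∂F/∂t − ∂F/∂s)(t,0) = (∇³γ)(t). -/

import Mathlib

/-!
Write `f_t, f_s` for the partial derivatives of the tangent surface `f`. Dividing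
`s F = f_t - f_s` by `s` at `s = 0` gives `F(t,0) = f_ts(t,0) - f_ss(t,0)` and
`2 F_s(t,0) = f_tss(t,0) - f_sss(t,0)`. Along `s = 0` we have `f = γ`, `f_s = γ'`, and
everywhere `f_ss = -Γ(f)(f_s, f_s)` because the `s`-curves are geodesics. By symmetry of second
derivatives the first identity becomes `F(t,0) = γ'' + Γ(γ)(γ', γ') = ∇²γ`. For the second,
`f_tss` and `f_sss` are the `t`- and `s`-derivatives of the geodesic equation: the terms
involving `DΓ` coincide, and since `Γ` is symmetric the rest gives `F_s(t,0) = -Γ(γ)(γ', ∇²γ)`.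
Hence `(F_t - F_s)(t,0) = (∇²γ)' + Γ(γ)(γ', ∇²γ) = ∇³γ`.
-/

open Set

noncomputable section

/-- Iterated covariant derivative of a curve `γ` with respect to the Christoffel
symbols `Γ` (in local coordinates): `covDeriv Γ γ k` is `∇^{k+1} γ`, i.e.
`covDeriv Γ γ 0 = ∇γ = γ'` and
`(∇^{k+1}γ)^λ(t) = d/dt (∇^k γ)^λ(t) + Σ_{μ,ν} Γ^λ_{μν}(γ(t)) (γ^μ)'(t) (∇^k γ)^ν(t)`. -/
noncomputable def covDeriv {m : ℕ} (Γ : (Fin m → ℝ) → Fin m → Fin m → Fin m → ℝ)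
    (γ : ℝ → Fin m → ℝ) : ℕ → ℝ → Fin m → ℝ
  | 0 => deriv γ
  | k + 1 => fun t l =>
      deriv (fun u => covDeriv Γ γ k u l) t +
        ∑ μ, ∑ ν, Γ (γ t) l μ ν * deriv γ t μ * covDeriv Γ γ k t ν

/-- `φ : W → Ω` is a geodesic flow for the Christoffel symbols `Γ` on the open set
`Ω ⊆ ℝ^m`: `W ⊆ Ω × ℝ^m × ℝ` is an open neighborhood of `Ω × ℝ^m × {0}`, `φ` is `C^∞`
on `W`, and for each `(x, v)` the curve `s ↦ φ(x, v, s)` is a geodesic with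
`φ(x,v,0) = x` and `∂φ/∂s(x,v,0) = v`. -/
structure IsGeodesicFlow {m : ℕ} (Γ : (Fin m → ℝ) → Fin m → Fin m → Fin m → ℝ)
    (Ω : Set (Fin m → ℝ)) (W : Set ((Fin m → ℝ) × (Fin m → ℝ) × ℝ))
    (φ : (Fin m → ℝ) × (Fin m → ℝ) × ℝ → Fin m → ℝ) : Prop where
  isOpen_W : IsOpen W
  subset_fst : ∀ p ∈ W, p.1 ∈ Ω
  mem_zero : ∀ x ∈ Ω, ∀ v, (x, v, (0 : ℝ)) ∈ W
  smooth : ContDiffOn ℝ (⊤ : ℕ∞) φ W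
  mapsTo : ∀ p ∈ W, φ p ∈ Ω
  init_pos : ∀ x ∈ Ω, ∀ v, φ (x, v, 0) = x
  init_vel : ∀ x ∈ Ω, ∀ v, deriv (fun s => φ (x, v, s)) 0 = v
  geodesic : ∀ p ∈ W, ∀ l,
    deriv (deriv (fun s => φ (p.1, p.2.1, s) l)) p.2.2 +
      ∑ μ, ∑ ν, Γ (φ p) l μ ν * deriv (fun s => φ (p.1, p.2.1, s) μ) p.2.2 *
        deriv (fun s => φ (p.1, p.2.1, s) ν) p.2.2 = 0

open Filter Topology
open scoped ContDiff

theorem ContDiffOn.differentiableAt_of_isOpen {E F : Type*} [NormedAddCommGroup E]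
    [NormedSpace ℝ E] [NormedAddCommGroup F] [NormedSpace ℝ F] {g : E → F} {V : Set E} {x : E}
    {n : WithTop ℕ∞} (hg : ContDiffOn ℝ n g V) (hV : IsOpen V) (hn : n ≠ 0) (hx : x ∈ V) :
    DifferentiableAt ℝ g x :=
  (hg.differentiableOn hn).differentiableAt (hV.mem_nhds hx)

section OneVariable

variable {E : Type*} [NormedAddCommGroup E] [NormedSpace ℝ E]

theorem deriv_id_smul_zero {k : ℝ → E} (hk : DifferentiableAt ℝ k 0) :
    deriv (fun s => s • k s) 0 = k 0 := by
  simpa using ((hasDerivAt_id' (0 : ℝ)).fun_smul hk.hasDerivAt).deriv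

theorem deriv_deriv_id_smul_zero {k : ℝ → E} (hk : ∀ᶠ s in 𝓝 0, DifferentiableAt ℝ k s)
    (hk' : DifferentiableAt ℝ (deriv k) 0) :
    deriv (deriv fun s => s • k s) 0 = (2 : ℝ) • deriv k 0 := by
  have h : deriv (fun s => s • k s) =ᶠ[𝓝 0] fun s => k s + s • deriv k s := by
    filter_upwards [hk] with s hs
    simpa [add_comm] using ((hasDerivAt_id' s).fun_smul hs.hasDerivAt).deriv
  rw [h.deriv_eq]
  simpa [two_smul] using
    (hk.self_of_nhds.hasDerivAt.fun_add ((hasDerivAt_id' (0 : ℝ)).fun_smul hk'.hasDerivAt)).deriv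

end OneVariable

theorem DifferentiableAt.deriv_apply {ι : Type*} [Fintype ι] {c : ℝ → ι → ℝ} {s : ℝ}
    (h : DifferentiableAt ℝ c s) (i : ι) : deriv (fun u => c u i) s = deriv c s i :=
  (hasDerivAt_pi.1 h.hasDerivAt i).deriv

theorem deriv_deriv_apply {ι : Type*} [Fintype ι] {c : ℝ → ι → ℝ} {s : ℝ}
    (hc : ∀ᶠ u in 𝓝 s, DifferentiableAt ℝ c u) (hc' : DifferentiableAt ℝ (deriv c) s) (i : ι) :
    deriv (deriv fun u => c u i) s = deriv (deriv c) s i := by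
  rw [← hc'.deriv_apply i]
  refine EventuallyEq.deriv_eq ?_
  filter_upwards [hc] with u hu using hu.deriv_apply i

section PartialDeriv

variable {E : Type*} [NormedAddCommGroup E] [NormedSpace ℝ E]

def partialFst (g : ℝ × ℝ → E) (q : ℝ × ℝ) : E := deriv (fun u => g (u, q.2)) q.1

def partialSnd (g : ℝ × ℝ → E) (q : ℝ × ℝ) : E := deriv (fun s => g (q.1, s)) q.2

variable {g G F : ℝ × ℝ → E} {V : Set (ℝ × ℝ)} {q : ℝ × ℝ}

theorem DifferentiableAt.hasDerivAt_partialFst (h : DifferentiableAt ℝ g q) :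
    HasDerivAt (fun u => g (u, q.2)) (partialFst g q) q.1 :=
  (h.comp q.1 (differentiableAt_id.prodMk (differentiableAt_const q.2))).hasDerivAt

theorem DifferentiableAt.hasDerivAt_partialSnd (h : DifferentiableAt ℝ g q) :
    HasDerivAt (fun s => g (q.1, s)) (partialSnd g q) q.2 :=
  (h.comp q.2 ((differentiableAt_const q.1).prodMk differentiableAt_id)).hasDerivAt

theorem DifferentiableAt.partialFst_eq (h : DifferentiableAt ℝ g q) :
    partialFst g q = fderiv ℝ g q (1, 0) :=
  (h.hasFDerivAt.comp_hasDerivAt_of_eq _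
    ((hasDerivAt_id _).prodMk (hasDerivAt_const _ _)) rfl).deriv

theorem DifferentiableAt.partialSnd_eq (h : DifferentiableAt ℝ g q) :
    partialSnd g q = fderiv ℝ g q (0, 1) :=
  (h.hasFDerivAt.comp_hasDerivAt_of_eq _
    ((hasDerivAt_const _ _).prodMk (hasDerivAt_id _)) rfl).deriv

theorem ContDiffOn.partialFst (hg : ContDiffOn ℝ ∞ g V) (hV : IsOpen V) :
    ContDiffOn ℝ ∞ (partialFst g) V :=
  ((hg.fderiv_of_isOpen hV (by simp)).clm_apply contDiffOn_const).congr fun _ hq =>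
    (hg.differentiableAt_of_isOpen hV (by simp) hq).partialFst_eq

theorem ContDiffOn.partialSnd (hg : ContDiffOn ℝ ∞ g V) (hV : IsOpen V) :
    ContDiffOn ℝ ∞ (partialSnd g) V :=
  ((hg.fderiv_of_isOpen hV (by simp)).clm_apply contDiffOn_const).congr fun _ hq =>
    (hg.differentiableAt_of_isOpen hV (by simp) hq).partialSnd_eq

theorem Filter.Eventually.slice_fst {P : ℝ × ℝ → Prop} (h : ∀ᶠ p in 𝓝 q, P p) :
    ∀ᶠ u in 𝓝 q.1, P (u, q.2) :=
  ((continuous_id.prodMk continuous_const).tendsto q.1).eventually h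

theorem Filter.Eventually.slice_snd {P : ℝ × ℝ → Prop} (h : ∀ᶠ p in 𝓝 q, P p) :
    ∀ᶠ s in 𝓝 q.2, P (q.1, s) :=
  ((continuous_const.prodMk continuous_id).tendsto q.2).eventually h

theorem Filter.EventuallyEq.partialFst_eq {g₁ g₂ : ℝ × ℝ → E} (h : g₁ =ᶠ[𝓝 q] g₂) :
    partialFst g₁ q = partialFst g₂ q :=
  EventuallyEq.deriv_eq h.slice_fst

theorem Filter.EventuallyEq.partialSnd_eq {g₁ g₂ : ℝ × ℝ → E} (h : g₁ =ᶠ[𝓝 q] g₂) :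
    partialSnd g₁ q = partialSnd g₂ q :=
  EventuallyEq.deriv_eq h.slice_snd

theorem partialSnd_partialFst (hg : ContDiffOn ℝ ∞ g V) (hV : IsOpen V) (hq : q ∈ V) :
    partialSnd (partialFst g) q = partialFst (partialSnd g) q := by
  have hg' : DifferentiableAt ℝ (fderiv ℝ g) q :=
    (hg.fderiv_of_isOpen (m := ∞) hV (by simp)).differentiableAt_of_isOpen hV (by simp) hq
  have hfst : partialFst g =ᶠ[𝓝 q] fun p => fderiv ℝ g p (1, 0) := by
    filter_upwards [hV.mem_nhds hq] with p hp
    exact (hg.differentiableAt_of_isOpen hV (by simp) hp).partialFst_eq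
  have hsnd : partialSnd g =ᶠ[𝓝 q] fun p => fderiv ℝ g p (0, 1) := by
    filter_upwards [hV.mem_nhds hq] with p hp
    exact (hg.differentiableAt_of_isOpen hV (by simp) hp).partialSnd_eq
  rw [hfst.partialSnd_eq, hsnd.partialFst_eq, partialSnd, partialFst,
    (hg'.hasDerivAt_partialSnd.clm_apply (hasDerivAt_const _ ((1 : ℝ), (0 : ℝ)))).deriv,
    (hg'.hasDerivAt_partialFst.clm_apply (hasDerivAt_const _ ((0 : ℝ), (1 : ℝ)))).deriv,
    hg'.partialSnd_eq, hg'.partialFst_eq]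
  simpa using ((hg.contDiffAt (hV.mem_nhds hq)).isSymmSndFDerivAt (by simp [ENat.LEInfty.out]))
    (0, 1) (1, 0)

theorem eq_partialSnd_of_smul_eq {a : ℝ} (hF : DifferentiableAt ℝ F (a, 0))
    (hFG : ∀ᶠ q in 𝓝 (a, 0), q.2 • F q = G q) : F (a, 0) = partialSnd G (a, 0) := by
  have hslice : (fun s => s • F (a, s)) =ᶠ[𝓝 0] fun s => G (a, s) := hFG.slice_snd
  rw [partialSnd, ← hslice.deriv_eq, deriv_id_smul_zero hF.hasDerivAt_partialSnd.differentiableAt]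

theorem two_smul_partialSnd_eq_of_smul_eq {a : ℝ} (hF : ContDiffOn ℝ ∞ F V) (hV : IsOpen V)
    (ha : (a, 0) ∈ V) (hFG : ∀ q ∈ V, q.2 • F q = G q) :
    (2 : ℝ) • partialSnd F (a, 0) = partialSnd (partialSnd G) (a, 0) := by
  have hslice : (fun s => s • F (a, s)) =ᶠ[𝓝 0] fun s => G (a, s) :=
    (eventually_of_mem (hV.mem_nhds ha) hFG).slice_snd
  have hdiff : ∀ᶠ s in 𝓝 0, DifferentiableAt ℝ (fun s => F (a, s)) s :=
    Eventually.slice_snd (q := (a, 0)) <| eventually_of_mem (hV.mem_nhds ha) fun q hq =>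
      (hF.differentiableAt_of_isOpen hV (by simp) hq).hasDerivAt_partialSnd.differentiableAt
  have hFs := (hF.partialSnd hV).differentiableAt_of_isOpen hV (by simp) ha
  have hdiff' : DifferentiableAt ℝ (deriv fun s => F (a, s)) 0 :=
    hFs.hasDerivAt_partialSnd.differentiableAt
  change _ = deriv (deriv fun s => G (a, s)) 0
  rw [← hslice.deriv.deriv_eq, deriv_deriv_id_smul_zero hdiff hdiff']
  rfl

theorem partialSnd_sub {g₁ g₂ : ℝ × ℝ → E} (h₁ : DifferentiableAt ℝ g₁ q)
    (h₂ : DifferentiableAt ℝ g₂ q) :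
    partialSnd (g₁ - g₂) q = partialSnd g₁ q - partialSnd g₂ q :=
  (h₁.hasDerivAt_partialSnd.fun_sub h₂.hasDerivAt_partialSnd).deriv

end PartialDeriv

section Contraction

variable {m : ℕ}

def contract (A : Fin m → Fin m → Fin m → ℝ) (v w : Fin m → ℝ) : Fin m → ℝ :=
  fun l => ∑ μ, ∑ ν, A l μ ν * v μ * w ν

theorem contract_comm {A : Fin m → Fin m → Fin m → ℝ} (hA : ∀ l μ ν, A l μ ν = A l ν μ)
    (v w : Fin m → ℝ) : contract A v w = contract A w v := by
  funext l
  rw [contract, contract, Finset.sum_comm]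
  simp only [hA l, mul_right_comm]

theorem contract_add_right (A : Fin m → Fin m → Fin m → ℝ) (v w₁ w₂ : Fin m → ℝ) :
    contract A v (w₁ + w₂) = contract A v w₁ + contract A v w₂ := by
  funext l
  simp only [contract, Pi.add_apply, mul_add, Finset.sum_add_distrib]

theorem contract_neg_right (A : Fin m → Fin m → Fin m → ℝ) (v w : Fin m → ℝ) :
    contract A v (-w) = -contract A v w := by
  funext l
  simp only [contract, Pi.neg_apply, mul_neg, Finset.sum_neg_distrib]

theorem HasDerivAt.contract {A : ℝ → Fin m → Fin m → Fin m → ℝ} {v w : ℝ → Fin m → ℝ}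
    {A' : Fin m → Fin m → Fin m → ℝ} {v' w' : Fin m → ℝ} {t : ℝ} (hA : HasDerivAt A A' t)
    (hv : HasDerivAt v v' t) (hw : HasDerivAt w w' t) :
    HasDerivAt (fun u => contract (A u) (v u) (w u))
      (contract A' (v t) (w t) + contract (A t) v' (w t) + contract (A t) (v t) w') t := by
  refine hasDerivAt_pi.2 fun l => ?_
  have hAl μ ν : HasDerivAt (fun u => A u l μ ν) (A' l μ ν) t :=
    hasDerivAt_pi.1 (hasDerivAt_pi.1 (hasDerivAt_pi.1 hA l) μ) ν
  have h := HasDerivAt.fun_sum (u := Finset.univ) fun μ _ =>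
    HasDerivAt.fun_sum (u := Finset.univ) fun ν _ =>
      ((hAl μ ν).fun_mul (hasDerivAt_pi.1 hv μ)).fun_mul (hasDerivAt_pi.1 hw ν)
  refine h.congr_deriv ?_
  simp only [_root_.contract, Pi.add_apply, ← Finset.sum_add_distrib]
  refine Finset.sum_congr rfl fun μ _ => Finset.sum_congr rfl fun ν _ => ?_
  ring

theorem covDeriv_succ {Γ : (Fin m → ℝ) → Fin m → Fin m → Fin m → ℝ} {γ : ℝ → Fin m → ℝ}
    {k : ℕ} {t : ℝ} (h : DifferentiableAt ℝ (covDeriv Γ γ k) t) :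
    covDeriv Γ γ (k + 1) t =
      deriv (covDeriv Γ γ k) t + contract (Γ (γ t)) (deriv γ t) (covDeriv Γ γ k t) := by
  funext l
  simp only [covDeriv, Pi.add_apply, contract, h.deriv_apply l]

end Contraction

section GeodesicTangentSurface

variable {m : ℕ} {Γ : (Fin m → ℝ) → Fin m → Fin m → Fin m → ℝ} {γ : ℝ → Fin m → ℝ}
  {I : Set ℝ} {V : Set (ℝ × ℝ)} {f F : ℝ × ℝ → Fin m → ℝ} {t : ℝ}

structure IsGeodesicTangentSurface (Γ : (Fin m → ℝ) → Fin m → Fin m → Fin m → ℝ)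
    (γ : ℝ → Fin m → ℝ) (I : Set ℝ) (V : Set (ℝ × ℝ)) (f : ℝ × ℝ → Fin m → ℝ) : Prop where
  isOpen : IsOpen V
  contDiffOn : ContDiffOn ℝ ∞ f V
  mem_zero : ∀ t ∈ I, (t, 0) ∈ V
  apply_zero : ∀ t ∈ I, f (t, 0) = γ t
  partialSnd_zero : ∀ t ∈ I, partialSnd f (t, 0) = deriv γ t
  geodesic : ∀ q ∈ V,
    partialSnd (partialSnd f) q = -contract (Γ (f q)) (partialSnd f q) (partialSnd f q)

namespace IsGeodesicTangentSurface

theorem hasDerivAt_base (hS : IsGeodesicTangentSurface Γ γ I V f) (hI : IsOpen I)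
    (ht : t ∈ I) : HasDerivAt γ (deriv γ t) t := by
  have hγ : (fun u => f (u, 0)) =ᶠ[𝓝 t] γ :=
    eventually_of_mem (hI.mem_nhds ht) hS.apply_zero
  have hf : DifferentiableAt ℝ f (t, 0) :=
    hS.contDiffOn.differentiableAt_of_isOpen hS.isOpen (by simp) (hS.mem_zero t ht)
  exact (hγ.differentiableAt_iff.1 hf.hasDerivAt_partialFst.differentiableAt).hasDerivAt

theorem hasDerivAt_deriv_base (hS : IsGeodesicTangentSurface Γ γ I V f) (hI : IsOpen I)
    (ht : t ∈ I) : HasDerivAt (deriv γ) (partialFst (partialSnd f) (t, 0)) t := by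
  have hγ' : (fun u => partialSnd f (u, 0)) =ᶠ[𝓝 t] deriv γ :=
    eventually_of_mem (hI.mem_nhds ht) hS.partialSnd_zero
  exact (((hS.contDiffOn.partialSnd hS.isOpen).differentiableAt_of_isOpen hS.isOpen (by simp)
    (hS.mem_zero t ht)).hasDerivAt_partialFst).congr_of_eventuallyEq hγ'.symm

theorem partialSnd_partialSnd_zero (hS : IsGeodesicTangentSurface Γ γ I V f) (ht : t ∈ I) :
    partialSnd (partialSnd f) (t, 0) = -contract (Γ (γ t)) (deriv γ t) (deriv γ t) := by
  rw [hS.geodesic _ (hS.mem_zero t ht), hS.apply_zero t ht, hS.partialSnd_zero t ht]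

theorem covDeriv_one_eq (hS : IsGeodesicTangentSurface Γ γ I V f) (hI : IsOpen I)
    (ht : t ∈ I) :
    covDeriv Γ γ 1 t = partialSnd (partialFst f) (t, 0) - partialSnd (partialSnd f) (t, 0) := by
  rw [covDeriv_succ (Γ := Γ) (k := 0) (hS.hasDerivAt_deriv_base hI ht).differentiableAt,
    partialSnd_partialFst hS.contDiffOn hS.isOpen (hS.mem_zero t ht),
    hS.partialSnd_partialSnd_zero ht, sub_neg_eq_add, covDeriv,
    (hS.hasDerivAt_deriv_base hI ht).deriv]

theorem partialFst_partialSnd_partialSnd_zero (hS : IsGeodesicTangentSurface Γ γ I V f)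
    (hI : IsOpen I) (ht : t ∈ I) (hΓ : DifferentiableAt ℝ Γ (γ t)) :
    partialFst (partialSnd (partialSnd f)) (t, 0) =
      -(contract (fderiv ℝ Γ (γ t) (deriv γ t)) (deriv γ t) (deriv γ t) +
        contract (Γ (γ t)) (deriv (deriv γ) t) (deriv γ t) +
        contract (Γ (γ t)) (deriv γ t) (deriv (deriv γ) t)) := by
  have hγ' := (hS.hasDerivAt_deriv_base hI ht).differentiableAt.hasDerivAt
  have h : (fun u => partialSnd (partialSnd f) (u, 0)) =ᶠ[𝓝 t]
      fun u => -contract (Γ (γ u)) (deriv γ u) (deriv γ u) :=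
    eventually_of_mem (hI.mem_nhds ht) fun u hu => hS.partialSnd_partialSnd_zero hu
  have hΓγ := hΓ.hasFDerivAt.comp_hasDerivAt t (hS.hasDerivAt_base hI ht)
  rw [partialFst, h.deriv_eq]
  exact (hΓγ.contract hγ' hγ').fun_neg.deriv

theorem partialSnd_partialSnd_partialSnd_zero (hS : IsGeodesicTangentSurface Γ γ I V f)
    (ht : t ∈ I) (hΓ : DifferentiableAt ℝ Γ (γ t)) :
    partialSnd (partialSnd (partialSnd f)) (t, 0) =
      -(contract (fderiv ℝ Γ (γ t) (deriv γ t)) (deriv γ t) (deriv γ t) +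
        contract (Γ (γ t)) (partialSnd (partialSnd f) (t, 0)) (deriv γ t) +
        contract (Γ (γ t)) (deriv γ t) (partialSnd (partialSnd f) (t, 0))) := by
  have hq := hS.mem_zero t ht
  have hf := hS.contDiffOn.differentiableAt_of_isOpen hS.isOpen (by simp) hq
  have hfs := (hS.contDiffOn.partialSnd hS.isOpen).differentiableAt_of_isOpen hS.isOpen
    (by simp) hq
  have h : (fun s => partialSnd (partialSnd f) (t, s)) =ᶠ[𝓝 0]
      fun s => -contract (Γ (f (t, s))) (partialSnd f (t, s)) (partialSnd f (t, s)) :=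
    (eventually_of_mem (hS.isOpen.mem_nhds hq) hS.geodesic).slice_snd
  rw [← hS.apply_zero t ht] at hΓ
  have hΓf : HasDerivAt (fun s => Γ (f (t, s))) (fderiv ℝ Γ (f (t, 0)) (partialSnd f (t, 0))) 0 :=
    hΓ.hasFDerivAt.comp_hasDerivAt (f := fun s => f (t, s)) 0 hf.hasDerivAt_partialSnd
  have h' := (hΓf.contract hfs.hasDerivAt_partialSnd hfs.hasDerivAt_partialSnd).fun_neg.deriv
  rw [hS.apply_zero t ht, hS.partialSnd_zero t ht] at h'
  rw [partialSnd, h.deriv_eq, h']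

theorem partialSnd_partialSnd_sub_zero (hS : IsGeodesicTangentSurface Γ γ I V f)
    (hI : IsOpen I) (ht : t ∈ I) (hΓ : DifferentiableAt ℝ Γ (γ t))
    (hTF : ∀ l μ ν, Γ (γ t) l μ ν = Γ (γ t) l ν μ) :
    partialSnd (partialSnd (partialFst f - partialSnd f)) (t, 0) =
      -(2 : ℝ) • contract (Γ (γ t)) (deriv γ t) (covDeriv Γ γ 1 t) := by
  have hV := hS.isOpen
  have hq := hS.mem_zero t ht
  have hf := hS.contDiffOn
  have hsub : partialSnd (partialFst f - partialSnd f) =ᶠ[𝓝 (t, 0)]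
      partialSnd (partialFst f) - partialSnd (partialSnd f) :=
    eventually_of_mem (hV.mem_nhds hq) fun p hp => partialSnd_sub
      ((hf.partialFst hV).differentiableAt_of_isOpen hV (by simp) hp)
      ((hf.partialSnd hV).differentiableAt_of_isOpen hV (by simp) hp)
  have hcomm : partialSnd (partialFst f) =ᶠ[𝓝 (t, 0)] partialFst (partialSnd f) :=
    eventually_of_mem (hV.mem_nhds hq) fun p hp => partialSnd_partialFst hf hV hp
  have hmixed : partialSnd (partialSnd (partialFst f)) (t, 0) =
      partialFst (partialSnd (partialSnd f)) (t, 0) := by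
    rw [hcomm.partialSnd_eq, partialSnd_partialFst (hf.partialSnd hV) hV hq]
  rw [hsub.partialSnd_eq, partialSnd_sub
      ((hf.partialFst hV |>.partialSnd hV).differentiableAt_of_isOpen hV (by simp) hq)
      ((hf.partialSnd hV |>.partialSnd hV).differentiableAt_of_isOpen hV (by simp) hq),
    hmixed, hS.partialFst_partialSnd_partialSnd_zero hI ht hΓ,
    hS.partialSnd_partialSnd_partialSnd_zero ht hΓ, hS.partialSnd_partialSnd_zero ht,
    covDeriv_succ (Γ := Γ) (k := 0) (hS.hasDerivAt_deriv_base hI ht).differentiableAt]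
  simp only [covDeriv, contract_comm hTF _ (deriv γ t), contract_neg_right, contract_add_right]
  module

theorem eq_covDeriv_one_of_smul_eq (hS : IsGeodesicTangentSurface Γ γ I V f) (hI : IsOpen I)
    (ht : t ∈ I) (hF : DifferentiableAt ℝ F (t, 0))
    (hFG : ∀ q ∈ V, q.2 • F q = (partialFst f - partialSnd f) q) :
    F (t, 0) = covDeriv Γ γ 1 t := by
  have hV := hS.isOpen
  have hq := hS.mem_zero t ht
  rw [eq_partialSnd_of_smul_eq hF (eventually_of_mem (hV.mem_nhds hq) hFG),
    partialSnd_sub ((hS.contDiffOn.partialFst hV).differentiableAt_of_isOpen hV (by simp) hq)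
      ((hS.contDiffOn.partialSnd hV).differentiableAt_of_isOpen hV (by simp) hq),
    hS.covDeriv_one_eq hI ht]

theorem partialSnd_eq_of_smul_eq (hS : IsGeodesicTangentSurface Γ γ I V f) (hI : IsOpen I)
    (ht : t ∈ I) (hΓ : DifferentiableAt ℝ Γ (γ t))
    (hTF : ∀ l μ ν, Γ (γ t) l μ ν = Γ (γ t) l ν μ) (hF : ContDiffOn ℝ ∞ F V)
    (hFG : ∀ q ∈ V, q.2 • F q = (partialFst f - partialSnd f) q) :
    partialSnd F (t, 0) = -contract (Γ (γ t)) (deriv γ t) (covDeriv Γ γ 1 t) := by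
  have h := two_smul_partialSnd_eq_of_smul_eq hF hS.isOpen (hS.mem_zero t ht) hFG
  rw [hS.partialSnd_partialSnd_sub_zero hI ht hΓ hTF, neg_smul, ← smul_neg] at h
  exact smul_right_injective _ two_ne_zero h

end IsGeodesicTangentSurface

theorem IsGeodesicFlow.isGeodesicTangentSurface {Ω : Set (Fin m → ℝ)}
    {W : Set ((Fin m → ℝ) × (Fin m → ℝ) × ℝ)} {φ : (Fin m → ℝ) × (Fin m → ℝ) × ℝ → Fin m → ℝ}
    (hφ : IsGeodesicFlow Γ Ω W φ) (hI : IsOpen I) (hγ : ContDiffOn ℝ ∞ γ I)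
    (hγΩ : ∀ t ∈ I, γ t ∈ Ω) (hV : IsOpen V) (hVI : V ⊆ I ×ˢ univ)
    (hV0 : ∀ t ∈ I, (t, 0) ∈ V) (hVW : ∀ p ∈ V, (γ p.1, deriv γ p.1, p.2) ∈ W) :
    IsGeodesicTangentSurface Γ γ I V fun p => φ (γ p.1, deriv γ p.1, p.2) := by
  have hVI' : MapsTo Prod.fst V I := fun p hp => (hVI hp).1
  have hf : ContDiffOn ℝ ∞ (fun p : ℝ × ℝ => φ (γ p.1, deriv γ p.1, p.2)) V :=
    hφ.smooth.comp ((hγ.comp contDiffOn_fst hVI').prodMk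
      (((hγ.deriv_of_isOpen hI (by simp)).comp contDiffOn_fst hVI').prodMk contDiffOn_snd)) hVW
  refine ⟨hV, hf, hV0, fun t ht => hφ.init_pos _ (hγΩ t ht) _,
    fun t ht => hφ.init_vel _ (hγΩ t ht) (deriv γ t), fun q hq => funext fun l => ?_⟩
  have hslice : ∀ᶠ s in 𝓝 q.2, DifferentiableAt ℝ (fun s => φ (γ q.1, deriv γ q.1, s)) s :=
    Eventually.slice_snd <| eventually_of_mem (hV.mem_nhds hq) fun p hp =>
      (hf.differentiableAt_of_isOpen hV (by simp) hp).hasDerivAt_partialSnd.differentiableAt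
  have hfs := (hf.partialSnd hV).differentiableAt_of_isOpen hV (by simp) hq
  have hslice' : DifferentiableAt ℝ (deriv fun s => φ (γ q.1, deriv γ q.1, s)) q.2 :=
    hfs.hasDerivAt_partialSnd.differentiableAt
  have h := hφ.geodesic _ (hVW q hq) l
  dsimp only at h
  rw [deriv_deriv_apply hslice hslice'] at h
  simp only [hslice.self_of_nhds.deriv_apply] at h
  exact eq_neg_of_add_eq_zero_left h

end GeodesicTangentSurface

theorem characteristic_vector_field_eq_third_covariant_derivative_general (m : ℕ)
    (Γ : (Fin m → ℝ) → Fin m → Fin m → Fin m → ℝ)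
    (Ω : Set (Fin m → ℝ)) (hΩ : IsOpen Ω)
    (hΓ : ∀ l μ ν, ContDiffOn ℝ (⊤ : ℕ∞) (fun x => Γ x l μ ν) Ω)
    (hTF : ∀ x l μ ν, Γ x l μ ν = Γ x l ν μ)
    (W : Set ((Fin m → ℝ) × (Fin m → ℝ) × ℝ))
    (φ : (Fin m → ℝ) × (Fin m → ℝ) × ℝ → Fin m → ℝ)
    (hφ : IsGeodesicFlow Γ Ω W φ)
    (I : Set ℝ) (hI : IsOpen I)
    (γ : ℝ → Fin m → ℝ) (hγ : ContDiffOn ℝ (⊤ : ℕ∞) γ I) (hγΩ : ∀ t ∈ I, γ t ∈ Ω)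
    (V : Set (ℝ × ℝ)) (hV : IsOpen V) (hVI : V ⊆ I ×ˢ univ)
    (hV0 : ∀ t ∈ I, (t, (0 : ℝ)) ∈ V)
    (hVW : ∀ p ∈ V, (γ p.1, deriv γ p.1, p.2) ∈ W)
    (f : ℝ × ℝ → Fin m → ℝ)
    (hf : ∀ p : ℝ × ℝ, f p = φ (γ p.1, deriv γ p.1, p.2))
    (F : ℝ × ℝ → Fin m → ℝ) (hF : ContDiffOn ℝ (⊤ : ℕ∞) F V)
    (hsF : ∀ p ∈ V, p.2 • F p =
      deriv (fun u => f (u, p.2)) p.1 - deriv (fun u => f (p.1, u)) p.2) :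
    ∀ t ∈ I,
      (deriv (fun u => F (u, 0)) t - deriv (fun u => F (t, u)) 0) =
        covDeriv Γ γ 2 t := by
  intro t ht
  obtain rfl := funext hf
  have hS := hφ.isGeodesicTangentSurface hI hγ hγΩ hV hVI hV0 hVW
  have hΓs : ContDiffOn ℝ ∞ Γ Ω :=
    contDiffOn_pi.2 fun l => contDiffOn_pi.2 fun μ => contDiffOn_pi.2 fun ν => hΓ l μ ν
  have hΓt := hΓs.differentiableAt_of_isOpen hΩ (by simp) (hγΩ t ht)
  have hF0 : (fun u => F (u, 0)) =ᶠ[𝓝 t] covDeriv Γ γ 1 :=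
    eventually_of_mem (hI.mem_nhds ht) fun u hu => hS.eq_covDeriv_one_of_smul_eq hI hu
      (hF.differentiableAt_of_isOpen hV (by simp) (hV0 u hu)) hsF
  have hFt : HasDerivAt (covDeriv Γ γ 1) (partialFst F (t, 0)) t :=
    (hF.differentiableAt_of_isOpen hV (by simp) (hV0 t ht)).hasDerivAt_partialFst
      |>.congr_of_eventuallyEq hF0.symm
  rw [covDeriv_succ hFt.differentiableAt, hF0.deriv_eq]
  change _ - partialSnd F (t, 0) = _
  rw [hS.partialSnd_eq_of_smul_eq hI ht hΓt (hTF (γ t)) hF hsF, sub_neg_eq_add]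

/-- If the connection is torsion free, then the characteristic vector
field `(∂F/∂t − ∂F/∂s)(t,0)` of the `∇`-tangent surface, where `s F = ∂f/∂t − ∂f/∂s`,
equals `(∇³γ)(t)`. -/
theorem characteristic_vector_field_eq_third_covariant_derivative (m : ℕ)
    (Γ : (Fin m → ℝ) → Fin m → Fin m → Fin m → ℝ)
    (Ω : Set (Fin m → ℝ)) (hΩ : IsOpen Ω)
    (hΓ : ∀ l μ ν, ContDiffOn ℝ (⊤ : ℕ∞) (fun x => Γ x l μ ν) Ω)
    (hTF : ∀ x l μ ν, Γ x l μ ν = Γ x l ν μ)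
    (W : Set ((Fin m → ℝ) × (Fin m → ℝ) × ℝ))
    (φ : (Fin m → ℝ) × (Fin m → ℝ) × ℝ → Fin m → ℝ)
    (hφ : IsGeodesicFlow Γ Ω W φ)
    (I : Set ℝ) (hI : IsOpen I) (hI' : I.OrdConnected)
    (γ : ℝ → Fin m → ℝ) (hγ : ContDiffOn ℝ (⊤ : ℕ∞) γ I) (hγΩ : ∀ t ∈ I, γ t ∈ Ω)
    (V : Set (ℝ × ℝ)) (hV : IsOpen V) (hVI : V ⊆ I ×ˢ univ)
    (hV0 : ∀ t ∈ I, (t, (0 : ℝ)) ∈ V)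
    (hVW : ∀ p ∈ V, (γ p.1, deriv γ p.1, p.2) ∈ W)
    (f : ℝ × ℝ → Fin m → ℝ)
    (hf : ∀ p : ℝ × ℝ, f p = φ (γ p.1, deriv γ p.1, p.2))
    (F : ℝ × ℝ → Fin m → ℝ) (hF : ContDiffOn ℝ (⊤ : ℕ∞) F V)
    (hsF : ∀ p ∈ V, p.2 • F p =
      deriv (fun u => f (u, p.2)) p.1 - deriv (fun u => f (p.1, u)) p.2) :
    ∀ t ∈ I,
      (deriv (fun u => F (u, 0)) t - deriv (fun u => F (t, u)) 0) =
        covDeriv Γ γ 2 t :=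
  characteristic_vector_field_eq_third_covariant_derivative_general m Γ Ω hΩ hΓ hTF W φ hφ I hI γ hγ
    hγΩ V hV hVI hV0 hVW f hf F hF hsF
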